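/- Let Λ be a free abelian group of finite rank, V = ℝ ⊗_ℤ Λ, and E a finite subset of Λ. Define U(E) = {X ∈ Pos(Λ) : X ∩ E = ∅}. Then the following are equivalent: (1) U(E) = ∅; (2) there exist n ≥ 1, λ₁, …, λ_n ∈ E and positive integers r₁, …, r_n with r₁λ₁ + ⋯ + r_nλ_n = 0; (3) there is no linear form φ on V with φ(λ) > 0 for all λ ∈ E. -/

import Mathlib

/-!
A positive combination of elements outside a positive subset `X` stays outside `X`: if `a, b ∉ X`
then `-b ∈ X`, so `a + b ∈ X` would force `a ∈ X`. As `0 ∈ X`, a relation `∑ rᵢ λᵢ = 0` with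
`λᵢ ∈ E` rules out every `X` missing `E`. Conversely, a form `φ` positive on `E` gives the positive
subset `{φ ≤ 0}` missing `E`.

If no form is positive on `E`, Hahn–Banach puts `0` in the convex hull of `E` in `V`, i.e. there is
a relation `∑ yᵢ λᵢ = 0` with real `yᵢ > 0`. Writing the `yᵢ` in a `ℚ`-basis of their `ℚ`-span and
moving the basis vectors to nearby rationals gives a `ℚ`-linear `f : ℝ → ℚ` with `f yᵢ > 0`; it
preserves every integer relation among the `yᵢ`, so after clearing denominators the `f yᵢ` are the
positive integer weights.
-/

open Pointwise
open scoped TensorProduct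

def IsPositiveSubset {Λ : Type*} [AddCommGroup Λ] (X : Set Λ) : Prop :=
  X ∪ (-X) = Set.univ ∧ X + X ⊆ X ∧ ∃ H : AddSubgroup Λ, (H : Set Λ) = X ∩ (-X)

namespace IsPositiveSubset

variable {Λ : Type*} [AddCommGroup Λ] {X : Set Λ}

theorem zero_mem (hX : IsPositiveSubset X) : (0 : Λ) ∈ X := by
  obtain h | h := hX.1.symm ▸ Set.mem_univ (0 : Λ)
  · exact h
  · simpa using h

theorem neg_mem_of_notMem (hX : IsPositiveSubset X) {a : Λ} (ha : a ∉ X) : -a ∈ X :=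
  (hX.1.symm ▸ Set.mem_univ a : a ∈ X ∪ -X).resolve_left ha

theorem add_notMem (hX : IsPositiveSubset X) {a b : Λ} (ha : a ∉ X) (hb : b ∉ X) :
    a + b ∉ X := fun hab ↦
  ha (by simpa using hX.2.1 (Set.add_mem_add hab (hX.neg_mem_of_notMem hb)))

theorem nsmul_notMem (hX : IsPositiveSubset X) {a : Λ} (ha : a ∉ X) {n : ℕ} (hn : 0 < n) :
    n • a ∉ X := by
  induction n, hn using Nat.le_induction with
  | base => simpa using ha
  | succ n _ ih => rw [succ_nsmul]; exact hX.add_notMem ih ha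

theorem sum_notMem {ι : Type*} (hX : IsPositiveSubset X) {s : Finset ι} (hs : s.Nonempty)
    {f : ι → Λ} (hf : ∀ i ∈ s, f i ∉ X) : ∑ i ∈ s, f i ∉ X :=
  Finset.sum_induction_nonempty f (· ∉ X) (fun _ _ ↦ hX.add_notMem) hs hf

end IsPositiveSubset

theorem isPositiveSubset_setOf_nonpos {Λ R : Type*} [AddCommGroup Λ] [AddCommGroup R]
    [LinearOrder R] [IsOrderedAddMonoid R] (f : Λ →+ R) : IsPositiveSubset {l | f l ≤ 0} := by
  refine ⟨?_, ?_, f.ker, ?_⟩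
  · ext l
    simpa using le_total (f l) 0
  · rintro _ ⟨a, ha, b, hb, rfl⟩
    simpa using add_nonpos ha hb
  · ext l
    simp [le_antisymm_iff, and_comm]

theorem exists_forall_pos_of_zero_notMem_convexHull {E : Type*} [AddCommGroup E] [Module ℝ E]
    [TopologicalSpace E] [IsTopologicalAddGroup E] [ContinuousSMul ℝ E] [LocallyConvexSpace ℝ E]
    [T2Space E] {s : Set E} (hs : s.Finite) (h : 0 ∉ convexHull ℝ s) :
    ∃ f : StrongDual ℝ E, ∀ x ∈ s, 0 < f x := by
  obtain ⟨f, u, hu, hf⟩ :=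
    geometric_hahn_banach_point_closed (convex_convexHull ℝ s) (hs.isClosed_convexHull ℝ) h
  exact ⟨f, fun x hx ↦ (map_zero f ▸ hu).trans (hf x (subset_convexHull ℝ s hx))⟩

theorem exists_linearMap_forall_pos_of_zero_notMem_convexHull {V : Type*} [AddCommGroup V]
    [Module ℝ V] {s : Finset V} (h : (0 : V) ∉ convexHull ℝ (s : Set V)) :
    ∃ φ : V →ₗ[ℝ] ℝ, ∀ x ∈ s, 0 < φ x := by
  let W := Submodule.span ℝ (s : Set V)
  let e := (Module.finBasis ℝ W).equivFun
  obtain ⟨P, hP⟩ := W.subtype.exists_leftInverse_of_injective W.ker_subtype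
  let g : V →ₗ[ℝ] Fin (Module.finrank ℝ W) → ℝ := e.toLinearMap ∘ₗ P
  let L : (Fin (Module.finrank ℝ W) → ℝ) →ₗ[ℝ] V := W.subtype ∘ₗ e.symm.toLinearMap
  have hLg : ∀ x ∈ s, L (g x) = x := fun x hx ↦ by
    simpa [L, g] using
      congrArg Subtype.val (LinearMap.congr_fun hP ⟨x, Submodule.subset_span hx⟩)
  have hg : (0 : Fin (Module.finrank ℝ W) → ℝ) ∉ convexHull ℝ (g '' s) := fun h0 ↦ h <| by
    have := Set.mem_image_of_mem L h0
    rwa [LinearMap.image_convexHull, map_zero, Set.image_image, Set.image_congr hLg,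
      Set.image_id'] at this
  obtain ⟨f, hf⟩ := exists_forall_pos_of_zero_notMem_convexHull (s.finite_toSet.image g) hg
  exact ⟨(f : _ →ₗ[ℝ] ℝ) ∘ₗ g, fun x hx ↦ hf _ (Set.mem_image_of_mem g hx)⟩

theorem exists_fin_pos_smul_sum_eq_zero_of_zero_mem_convexHull {R V : Type*} [Field R]
    [LinearOrder R] [IsStrictOrderedRing R] [AddCommGroup V] [Module R V] {s : Finset V}
    (h : (0 : V) ∈ convexHull R (s : Set V)) :
    ∃ (n : ℕ) (v : Fin n → V) (y : Fin n → R), 1 ≤ n ∧ (∀ i, v i ∈ s) ∧ (∀ i, 0 < y i) ∧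
      ∑ i, y i • v i = 0 := by
  classical
  obtain ⟨w, hw0, hw1, hw⟩ := Finset.mem_convexHull'.1 h
  let t := s.filter (0 < w ·)
  have hsum : ∑ x ∈ t, w x • x = 0 := by
    rw [Finset.sum_filter_of_ne fun x hx hne ↦ (hw0 x hx).lt_of_ne' (left_ne_zero_of_smul hne),
      hw]
  have ht : t.Nonempty := by
    refine Finset.nonempty_of_sum_ne_zero (f := w) ?_
    rw [Finset.sum_filter_of_ne fun x hx hne ↦ (hw0 x hx).lt_of_ne' hne, hw1]
    exact one_ne_zero
  refine ⟨t.card, fun i ↦ t.equivFin.symm i, fun i ↦ w (t.equivFin.symm i), t.card_pos.2 ht,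
    fun i ↦ (Finset.mem_filter.1 (t.equivFin.symm i).2).1,
    fun i ↦ (Finset.mem_filter.1 (t.equivFin.symm i).2).2, ?_⟩
  rw [Equiv.sum_comp t.equivFin.symm (fun x ↦ w x • (x : V)),
    Finset.sum_coe_sort t fun x ↦ w x • x, hsum]

theorem exists_rat_linearMap_mem_open {ι : Type*} [Fintype ι] (y : ι → ℝ)
    {U : Set (ι → ℝ)} (hU : IsOpen U) (hyU : y ∈ U) :
    ∃ f : ℝ →ₗ[ℚ] ℚ, (fun i ↦ (f (y i) : ℝ)) ∈ U := by
  let T := Submodule.span ℚ (Set.range y)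
  have : FiniteDimensional ℚ T := .span_of_finite ℚ (Set.finite_range y)
  let b := Module.finBasis ℚ T
  have hy : ∀ i, y i ∈ T := fun i ↦ Submodule.subset_span ⟨i, rfl⟩
  let c : ι → Fin (Module.finrank ℚ T) → ℚ := fun i ↦ b.equivFun ⟨y i, hy i⟩
  -- for rational `ρ`, `Φ ρ` is `(f (y i))ᵢ` where `f` is `ℚ`-linear with `f (b s) = ρ s`
  let Φ : (Fin (Module.finrank ℚ T) → ℝ) → ι → ℝ := fun ρ i ↦ ∑ s, (c i s : ℝ) * ρ s
  have hΦ : Φ (fun s ↦ (b s : ℝ)) = y := by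
    funext i
    have := congrArg Subtype.val (b.sum_equivFun ⟨y i, hy i⟩)
    simp only [Submodule.coe_sum, Submodule.coe_smul, Rat.smul_def] at this
    simpa [Φ, c] using this
  have hopen : IsOpen (Φ ⁻¹' U) := hU.preimage (by fun_prop)
  obtain ⟨ρ, hρ⟩ := (DenseRange.piMap fun _ ↦ Rat.denseRange_cast).exists_mem_open
    hopen ⟨_, show _ ∈ Φ ⁻¹' U by rwa [Set.mem_preimage, hΦ]⟩
  obtain ⟨f, hf⟩ := LinearMap.exists_extend (b.constr ℚ ρ)
  refine ⟨f, ?_⟩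
  have hfy : ∀ i, f (y i) = ∑ s, c i s * ρ s := fun i ↦ by
    rw [show y i = T.subtype ⟨y i, hy i⟩ from rfl, ← LinearMap.comp_apply, hf,
      Module.Basis.constr_apply_fintype (S := ℚ)]
    simp [c, mul_comm]
  suffices h : (fun i ↦ (f (y i) : ℝ)) = Φ (fun s ↦ (ρ s : ℝ)) from h ▸ hρ
  funext i
  simp [hfy, Φ]

theorem exists_pos_nat_mul_eq_natCast {ι : Type*} [Fintype ι] (q : ι → ℚ) (hq : ∀ i, 0 ≤ q i) :
    ∃ N : ℕ, 0 < N ∧ ∃ r : ι → ℕ, ∀ i, (r i : ℚ) = N * q i := by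
  refine ⟨∏ i, (q i).den, Finset.prod_pos fun i _ ↦ (q i).den_pos, ?_⟩
  choose k hk using fun i ↦ Finset.dvd_prod_of_mem (fun i ↦ (q i).den) (Finset.mem_univ i)
  refine ⟨fun i ↦ k i * (q i).num.toNat, fun i ↦ ?_⟩
  have hnum : ((q i).num.toNat : ℚ) = (q i).num := by
    exact_mod_cast Int.toNat_of_nonneg (Rat.num_nonneg.2 (hq i))
  rw [hk i]
  push_cast
  rw [hnum, ← Rat.mul_den_eq_num]
  ring

theorem exists_pos_nat_inheriting_int_relations {ι : Type*} [Fintype ι] (y : ι → ℝ)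
    (hy : ∀ i, 0 < y i) :
    ∃ r : ι → ℕ, (∀ i, 0 < r i) ∧
      ∀ a : ι → ℤ, ∑ i, a i * y i = 0 → ∑ i, a i * (r i : ℤ) = 0 := by
  have hU : IsOpen {x : ι → ℝ | ∀ i, 0 < x i} := by
    simp only [Set.ofPred_forall]
    exact isOpen_iInter_of_finite fun i ↦ isOpen_lt continuous_const (continuous_apply i)
  obtain ⟨f, hf⟩ := exists_rat_linearMap_mem_open y hU hy
  have hfpos : ∀ i, 0 < f (y i) := fun i ↦ Rat.cast_pos.1 (hf i)
  obtain ⟨N, hN, r, hr⟩ := exists_pos_nat_mul_eq_natCast (fun i ↦ f (y i)) fun i ↦ (hfpos i).le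
  refine ⟨r, fun i ↦ ?_, fun a ha ↦ ?_⟩
  · have : (0 : ℚ) < r i := by rw [hr]; exact mul_pos (by exact_mod_cast hN) (hfpos i)
    exact_mod_cast this
  · have hsum : ∑ i, a i • y i = 0 := by simpa only [zsmul_eq_mul] using ha
    have hfa : ∑ i, a i * f (y i) = 0 := by
      have := congrArg f hsum
      simp_rw [map_sum, map_zsmul, map_zero] at this
      simpa only [zsmul_eq_mul] using this
    have : ((∑ i, a i * (r i : ℤ) : ℤ) : ℚ) = N * ∑ i, a i * f (y i) := by
      push_cast
      simp_rw [hr, Finset.mul_sum]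
      exact Finset.sum_congr rfl fun i _ ↦ by ring
    rw [hfa, mul_zero] at this
    exact_mod_cast this

theorem exists_pos_nat_relation_of_pos_real_relation {Λ : Type*} [AddCommGroup Λ]
    [Module.Free ℤ Λ] {ι : Type*} [Fintype ι] (l : ι → Λ) (y : ι → ℝ) (hy : ∀ i, 0 < y i)
    (h : ∑ i, y i • ((1 : ℝ) ⊗ₜ[ℤ] l i) = 0) :
    ∃ r : ι → ℕ, (∀ i, 0 < r i) ∧ ∑ i, (r i : ℤ) • l i = 0 := by
  let b := Module.Free.chooseBasis ℤ Λ
  obtain ⟨r, hr, hrel⟩ := exists_pos_nat_inheriting_int_relations y hy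
  refine ⟨r, hr, b.repr.injective (Finsupp.ext fun j ↦ ?_)⟩
  have hj : ∑ i, b.repr (l i) j * y i = 0 := by
    simpa [Finsupp.finsetSum_apply, mul_comm] using
      congrArg (fun x ↦ (b.baseChange ℝ).repr x j) h
  simpa [Finsupp.finsetSum_apply, mul_comm] using hrel (fun i ↦ b.repr (l i) j) hj

theorem uce_empty_tfae_general {Λ : Type*} [AddCommGroup Λ]
    [Module.Free ℤ Λ] (E : Finset Λ) :
    [({X : Set Λ | IsPositiveSubset X ∧ X ∩ (E : Set Λ) = ∅} = ∅),
     (∃ (n : ℕ) (l : Fin n → Λ) (r : Fin n → ℕ), 1 ≤ n ∧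
        (∀ i, l i ∈ E) ∧ (∀ i, 0 < r i) ∧ ∑ i, (r i : ℤ) • l i = 0),
     (¬ ∃ φ : (ℝ ⊗[ℤ] Λ) →ₗ[ℝ] ℝ, ∀ l ∈ E, 0 < φ ((1 : ℝ) ⊗ₜ[ℤ] l))].TFAE := by
  tfae_have 2 → 1 := by
    rintro ⟨n, l, r, hn, hlE, hr, hsum⟩
    refine Set.eq_empty_of_forall_notMem fun X ⟨hX, hXE⟩ ↦ ?_
    have hl : ∀ i, l i ∉ X := fun i hi ↦ Set.eq_empty_iff_forall_notMem.1 hXE (l i) ⟨hi, hlE i⟩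
    refine hX.sum_notMem (Finset.univ_nonempty_iff.2 ⟨⟨0, hn⟩⟩) (fun i _ ↦ ?_)
      (hsum ▸ hX.zero_mem)
    simpa [natCast_zsmul] using hX.nsmul_notMem (hl i) (hr i)
  tfae_have 1 → 3 := by
    rintro h1 ⟨φ, hφ⟩
    let f : Λ →+ ℝ := (φ.restrictScalars ℤ ∘ₗ TensorProduct.mk ℤ ℝ Λ 1).toAddMonoidHom
    have hf : {l | f l ≤ 0} ∈ {X : Set Λ | IsPositiveSubset X ∧ X ∩ (E : Set Λ) = ∅} :=
      ⟨isPositiveSubset_setOf_nonpos f,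
        Set.eq_empty_of_forall_notMem fun l ⟨hl, hlE⟩ ↦ (hφ l hlE).not_ge hl⟩
    simp [h1] at hf
  tfae_have 3 → 2 := by
    intro h3
    classical
    have h0 : (0 : ℝ ⊗[ℤ] Λ) ∈ convexHull ℝ ↑(E.image ((1 : ℝ) ⊗ₜ[ℤ] ·)) := by
      by_contra h0
      obtain ⟨φ, hφ⟩ := exists_linearMap_forall_pos_of_zero_notMem_convexHull h0
      exact h3 ⟨φ, fun l hl ↦ hφ _ (Finset.mem_image_of_mem _ hl)⟩
    obtain ⟨n, v, y, hn, hv, hy, hsum⟩ :=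
      exists_fin_pos_smul_sum_eq_zero_of_zero_mem_convexHull h0
    choose l hlE hl using fun i ↦ Finset.mem_image.1 (hv i)
    obtain ⟨r, hr, hrel⟩ :=
      exists_pos_nat_relation_of_pos_real_relation l y hy (by simpa only [hl] using hsum)
    exact ⟨n, l, r, hn, hlE, hr, hrel⟩
  tfae_finish

theorem uce_empty_tfae {Λ : Type*} [AddCommGroup Λ]
    [Module.Free ℤ Λ] [Module.Finite ℤ Λ] (E : Finset Λ) :
    [({X : Set Λ | IsPositiveSubset X ∧ X ∩ (E : Set Λ) = ∅} = ∅),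
     (∃ (n : ℕ) (l : Fin n → Λ) (r : Fin n → ℕ), 1 ≤ n ∧
        (∀ i, l i ∈ E) ∧ (∀ i, 0 < r i) ∧ ∑ i, (r i : ℤ) • l i = 0),
     (¬ ∃ φ : (ℝ ⊗[ℤ] Λ) →ₗ[ℝ] ℝ, ∀ l ∈ E, 0 < φ ((1 : ℝ) ⊗ₜ[ℤ] l))].TFAE :=
  uce_empty_tfae_general E
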